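/- Let $\mathscr{T}$ be an expanded tree with $\mathscr{T} \to (\mathscr{T})^{\mathrm{end}(1)}_\sigma$ for an infinite cardinal $\sigma$. Then $\mathscr{T} \to (\mathscr{T})^n_\sigma$ for every $n < \omega$: for every coloring $\mathbf{c} : \mathrm{eseq}_n(\mathscr{T}) \to \sigma$ there is an embedding $g$ of $\mathscr{T}$ into itself such that $\mathbf{c}(g(\bar{a})) = \mathbf{c}(g(\bar{b}))$ whenever $\bar{a}, \bar{b} \in \mathrm{eseq}_n(\mathscr{T})$ are $\mathscr{T}$-similar. -/

import Mathlib

open scoped Classical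

noncomputable section

/-- Binary sequences of ordinal length `< α`, coded as functions `Ordinal → Option Bool`
which are `some` exactly below some length `l < α`. -/
def IsBSeq (α : Ordinal) (f : Ordinal → Option Bool) : Prop :=
  ∃ l < α, ∀ β, (f β).isSome ↔ β < l

/-- The length of a coded sequence. -/
def slen (f : Ordinal → Option Bool) : Ordinal :=
  sInf {β | f β = none}

/-- Restriction of a sequence to length `δ`. -/
def srestrict (f : Ordinal → Option Bool) (δ : Ordinal) : Ordinal → Option Bool :=
  fun β => if β < δ then f β else none

/-- The longest common initial segment (meet) of two sequences. -/
def smeet (f g : Ordinal → Option Bool) : Ordinal → Option Bool :=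
  srestrict f (sInf {β | ¬(f β = g β ∧ (f β).isSome)})

/-- `sprefix f g` : `f` is an initial segment of `g`. -/
def sprefix (f g : Ordinal → Option Bool) : Prop :=
  ∀ β, (f β).isSome → g β = f β


/-- Abbreviation for coded binary sequences. -/
abbrev BS := Ordinal → Option Bool

/-- The successor (branching) relations: `sR b f g` iff `g` extends `f⌢⟨b⟩`,
i.e. `f ⊴ g` and `g` takes value `b` at the level of `f`. -/
def sR (b : Bool) (f g : BS) : Prop :=
  sprefix f g ∧ g (slen f) = some b

/-- Definition 1.7(1): `eseq_n` relative to a subtree `T` of `{}^{<κ}2` with level-respecting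
well order `lst`: `a` is `lst`-increasing, its members lie in `T`, it is closed under meets,
and closed under restriction of one entry to the level of another. -/
def Eseq (T : Set BS) (lst : BS → BS → Prop) (n : ℕ) (a : Fin n → BS) : Prop :=
  (∀ i, a i ∈ T) ∧
  (∀ i j : Fin n, i < j → lst (a i) (a j)) ∧
  (∀ i j : Fin n, ∃ m, smeet (a i) (a j) = a m) ∧
  (∀ i j : Fin n, slen (a i) ≤ slen (a j) → ∃ m, srestrict (a j) (slen (a i)) = a m)

/-- Definition 1.7(3): `𝒯`-similarity of `n`-tuples: corresponding indices satisfy the same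
tree-order relations, the same branching relations `R₀, R₁`, the same meet identities,
and the same level comparisons. -/
def TSimilar (n : ℕ) (a b : Fin n → BS) : Prop :=
  ∀ k i m : Fin n,
    (sprefix (a k) (a i) ↔ sprefix (b k) (b i)) ∧
    (∀ c : Bool, sR c (a k) (a i) ↔ sR c (b k) (b i)) ∧
    (smeet (a k) (a i) = a m ↔ smeet (b k) (b i) = b m) ∧
    (slen (a k) ≤ slen (a i) ↔ slen (b k) ≤ slen (b i))


/-- A `⊆`-embedding of the expanded tree `(T₂, lst₂)` into `(T₁, lst₁)` (Definition 1.4(1)):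
injective, preserving membership, the initial-segment order, the branching relations,
level comparisons (hence equality of levels), the well order, and meets. -/
def IsEmb (T2 T1 : Set BS) (lst2 lst1 : BS → BS → Prop) (g : BS → BS) : Prop :=
  (∀ x ∈ T2, g x ∈ T1) ∧
  (∀ x ∈ T2, ∀ y ∈ T2, g x = g y → x = y) ∧
  (∀ x ∈ T2, ∀ y ∈ T2,
    (sprefix x y ↔ sprefix (g x) (g y)) ∧
    (∀ c : Bool, sR c x y ↔ sR c (g x) (g y)) ∧
    (slen x ≤ slen y ↔ slen (g x) ≤ slen (g y)) ∧
    (lst2 x y ↔ lst1 (g x) (g y)) ∧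
    g (smeet x y) = smeet (g x) (g y))

/-- The number of levels of the tuple `a` lying strictly above `lev (a ℓ)`. -/
def TopCount (n : ℕ) (a : Fin n → BS) (ℓ : Fin n) : ℕ :=
  ((Finset.univ.image fun i => slen (a i)).filter fun x => slen (a ℓ) < x).card

/-- Definition 1.8(2): `𝒯₁ → (𝒯₂)^{end(k)}_σ` : for every coloring `c` of `eseq(𝒯₁)` by `σ`
there is an embedding `g` of `𝒯₂` into `𝒯₁` such that the induced coloring of two similar
closed tuples agrees whenever the tuples agree on all entries which are not among the top
`k` levels occurring in the tuple. -/
def ArrowEnd (T1 : Set BS) (lst1 : BS → BS → Prop) (T2 : Set BS)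
    (lst2 : BS → BS → Prop) (σ : Type*) (k : ℕ) : Prop :=
  ∀ c : (n : ℕ) → (Fin n → BS) → σ, ∃ g : BS → BS, IsEmb T2 T1 lst2 lst1 g ∧
    ∀ (n : ℕ) (a b : Fin n → BS), Eseq T2 lst2 n a → Eseq T2 lst2 n b →
      TSimilar n a b → (∀ ℓ : Fin n, k ≤ TopCount n a ℓ → b ℓ = a ℓ) →
      c n (fun i => g (a i)) = c n (fun i => g (b i))


/-!
Induction on a bound `N` for the length of the tuples. Given colorings `C`, end(1)-homogeneity
provides `g₁` such that the color of `g₁ ∘ w` depends only on the similarity type of the closed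
tuple `w` and on its lower part, the subtuple of entries below the top level. Color every closed
tuple `u` by the table which records, for each length `≤ N + 1` and each similarity type, the
color of `g₁ ∘ w` for a closed tuple `w` of that type with lower part `u`; there are finitely many
types and `σ` is infinite, so the table is coded by a single color. Lower parts are closed tuples
of smaller length, so the induction hypothesis gives `g₂` making the tables homogeneous. Similar
tuples have similar lower parts, hence the same table, hence the same color under `g₁ ∘ g₂`.
-/

universe u

section Sequences

variable {κ : Ordinal} {f g : BS} {δ β : Ordinal}

theorem IsBSeq.isSome_iff (hf : IsBSeq κ f) : (f β).isSome ↔ β < slen f := by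
  obtain ⟨l, -, hl⟩ := hf
  have hnone : {β | f β = none} = Set.Ici l := by
    ext β
    simp [← Option.not_isSome_iff_eq_none, hl]
  rw [slen, hnone, csInf_Ici, hl]

theorem IsBSeq.eq_none_iff (hf : IsBSeq κ f) : f β = none ↔ slen f ≤ β := by
  rw [← Option.not_isSome_iff_eq_none, hf.isSome_iff, not_lt]

theorem slen_srestrict_le : slen (srestrict f δ) ≤ δ :=
  csInf_le' (by simp [srestrict])

theorem slen_srestrict (hf : IsBSeq κ f) (h : δ ≤ slen f) : slen (srestrict f δ) = δ := by
  have hnone : {β | srestrict f δ β = none} = Set.Ici δ := by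
    ext β
    by_cases hβ : β < δ
    · simp [srestrict, hβ, hf.eq_none_iff, (hβ.trans_le h).not_ge]
    · simpa [srestrict, hβ] using not_lt.mp hβ
  rw [slen, hnone, csInf_Ici]

theorem sprefix_srestrict : sprefix (srestrict f δ) f := by
  intro β hβ
  by_cases h : β < δ <;> simp_all [srestrict]

theorem slen_le_of_sprefix (hg : IsBSeq κ g) (h : sprefix f g) : slen f ≤ slen g := by
  refine csInf_le' (Option.not_isSome_iff_eq_none.mp fun hs => ?_)
  have hgs : (g (slen g)).isSome := by rw [h _ hs]; exact hs
  exact lt_irrefl _ (hg.isSome_iff.mp hgs)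

theorem slen_smeet_le_left (hf : IsBSeq κ f) : slen (smeet f g) ≤ slen f :=
  slen_le_of_sprefix hf sprefix_srestrict

theorem srestrict_slen_of_sprefix (hf : IsBSeq κ f) (h : sprefix f g) :
    srestrict g (slen f) = f := by
  funext β
  by_cases hβ : β < slen f
  · simp [srestrict, hβ, h β (hf.isSome_iff.mpr hβ)]
  · simp [srestrict, hβ, hf.eq_none_iff.mpr (not_lt.mp hβ)]

end Sequences

section Types

variable {n m : ℕ} {a b : Fin n → BS} {ℓ ℓ' : Fin n}

/-- `Prop` is finite (classically), so there are finitely many similarity types of each length. -/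
abbrev SimType (n : ℕ) : Type :=
  Fin n → Fin n → Fin n → Prop × (Bool → Prop) × Prop × Prop

def simType (a : Fin n → BS) : SimType n := fun k i m =>
  (sprefix (a k) (a i), fun c => sR c (a k) (a i), smeet (a k) (a i) = a m,
    slen (a k) ≤ slen (a i))

theorem tSimilar_iff_simType_eq : TSimilar n a b ↔ simType a = simType b := by
  simp only [TSimilar, simType, funext_iff, Prod.mk.injEq, eq_iff_iff]

theorem TSimilar.comp (h : TSimilar n a b) (e : Fin m → Fin n) :
    TSimilar m (fun i => a (e i)) (fun i => b (e i)) :=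
  fun k i j => h (e k) (e i) (e j)

def lowerIndices (a : Fin n → BS) : Finset (Fin n) :=
  Finset.univ.filter fun ℓ => ∃ i, slen (a ℓ) < slen (a i)

theorem mem_lowerIndices : ℓ ∈ lowerIndices a ↔ ∃ i, slen (a ℓ) < slen (a i) := by
  simp [lowerIndices]

theorem mem_lowerIndices_of_slen_le (hℓ' : ℓ' ∈ lowerIndices a)
    (h : slen (a ℓ) ≤ slen (a ℓ')) : ℓ ∈ lowerIndices a := by
  obtain ⟨i, hi⟩ := mem_lowerIndices.mp hℓ'
  exact mem_lowerIndices.mpr ⟨i, h.trans_lt hi⟩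

theorem one_le_topCount_iff : 1 ≤ TopCount n a ℓ ↔ ℓ ∈ lowerIndices a := by
  simp [TopCount, Nat.one_le_iff_ne_zero, Finset.filter_eq_empty_iff, mem_lowerIndices]

theorem TSimilar.lowerIndices_eq (h : TSimilar n a b) : lowerIndices a = lowerIndices b := by
  ext ℓ
  simp only [mem_lowerIndices, ← not_le, (h _ ℓ ℓ).2.2.2]

theorem card_lowerIndices_le (a : Fin n → BS) : (lowerIndices a).card ≤ n - 1 := by
  cases n with
  | zero => simpa using Finset.card_le_univ (lowerIndices a)
  | succ n =>
    obtain ⟨top, htop⟩ := Finite.exists_max fun i => slen (a i)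
    have hsub : lowerIndices a ⊆ Finset.univ.erase top := fun ℓ hℓ =>
      Finset.mem_erase.mpr ⟨fun h => by
        obtain ⟨i, hi⟩ := mem_lowerIndices.mp hℓ
        exact (h ▸ hi).not_ge (htop i), Finset.mem_univ ℓ⟩
    simpa using Finset.card_le_card hsub

def HasLowerPart (w : Fin n → BS) (u : Fin m → BS) : Prop :=
  ∃ e : Fin m ↪o Fin n, Set.range e = lowerIndices w ∧ ∀ i, w (e i) = u i

theorem HasLowerPart.eq_of_lowerIndices_eq {w w' : Fin n → BS} {u : Fin m → BS}
    (h : HasLowerPart w u) (h' : HasLowerPart w' u) (hlow : lowerIndices w = lowerIndices w')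
    (hℓ : ℓ ∈ lowerIndices w) : w ℓ = w' ℓ := by
  obtain ⟨e, he, hu⟩ := h
  obtain ⟨e', he', hu'⟩ := h'
  obtain rfl : e = e' := OrderEmbedding.range_inj.mp (by rw [he, he', hlow])
  obtain ⟨i, rfl⟩ : ℓ ∈ Set.range e := he ▸ hℓ
  rw [hu, hu']

end Types

section Embeddings

variable {κ : Ordinal} {T T₁ T₂ T₃ : Set BS} {lst lst₁ lst₂ lst₃ : BS → BS → Prop}
  {g g₁ g₂ : BS → BS} {n m : ℕ} {a : Fin n → BS}

theorem isEmb_id : IsEmb T T lst lst id :=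
  ⟨fun _ hx => hx, fun _ _ _ _ h => h,
    fun _ _ _ _ => ⟨Iff.rfl, fun _ => Iff.rfl, Iff.rfl, Iff.rfl, rfl⟩⟩

theorem IsEmb.comp (h₁ : IsEmb T₂ T₁ lst₂ lst₁ g₁) (h₂ : IsEmb T₃ T₂ lst₃ lst₂ g₂) :
    IsEmb T₃ T₁ lst₃ lst₁ (g₁ ∘ g₂) := by
  obtain ⟨mem₁, inj₁, pres₁⟩ := h₁
  obtain ⟨mem₂, inj₂, pres₂⟩ := h₂
  refine ⟨fun x hx => mem₁ _ (mem₂ x hx),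
    fun x hx y hy hxy => inj₂ x hx y hy (inj₁ _ (mem₂ x hx) _ (mem₂ y hy) hxy),
    fun x hx y hy => ?_⟩
  obtain ⟨p₂, r₂, l₂, o₂, m₂⟩ := pres₂ x hx y hy
  obtain ⟨p₁, r₁, l₁, o₁, m₁⟩ := pres₁ _ (mem₂ x hx) _ (mem₂ y hy)
  exact ⟨p₂.trans p₁, fun c => (r₂ c).trans (r₁ c), l₂.trans l₁, o₂.trans o₁,
    by simp only [Function.comp_apply, m₂, m₁]⟩

theorem Eseq.map (hT₁ : ∀ f ∈ T₁, IsBSeq κ f) (hT₂ : ∀ f ∈ T₂, IsBSeq κ f)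
    (hg : IsEmb T₂ T₁ lst₂ lst₁ g) (ha : Eseq T₂ lst₂ n a) :
    Eseq T₁ lst₁ n (fun i => g (a i)) := by
  obtain ⟨hmem, hinc, hmeet, hres⟩ := ha
  obtain ⟨gmem, -, gpres⟩ := hg
  have pres := fun i j => gpres _ (hmem i) _ (hmem j)
  refine ⟨fun i => gmem _ (hmem i), fun i j hij => (pres i j).2.2.2.1.mp (hinc i j hij),
    fun i j => ?_, fun i j hle => ?_⟩
  · obtain ⟨k, hk⟩ := hmeet i j
    exact ⟨k, by rw [← (pres i j).2.2.2.2, hk]⟩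
  · obtain ⟨k, hk⟩ := hres i j ((pres i j).2.2.1.mpr hle)
    have hlen : slen (a k) = slen (a i) :=
      hk ▸ slen_srestrict (hT₂ _ (hmem j)) ((pres i j).2.2.1.mpr hle)
    have hlen' : slen (g (a k)) = slen (g (a i)) :=
      le_antisymm ((pres k i).2.2.1.mp hlen.le) ((pres i k).2.2.1.mp hlen.ge)
    refine ⟨k, ?_⟩
    rw [← hlen']
    exact srestrict_slen_of_sprefix (hT₁ _ (gmem _ (hmem k)))
      ((pres k j).1.mp (hk ▸ sprefix_srestrict))

theorem Eseq.tSimilar_map (hg : IsEmb T₂ T₁ lst₂ lst₁ g) (ha : Eseq T₂ lst₂ n a) :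
    TSimilar n (fun i => g (a i)) a := by
  obtain ⟨hmem, -, hmeet, -⟩ := ha
  obtain ⟨-, ginj, gpres⟩ := hg
  intro k i j
  obtain ⟨hp, hr, hl, -, hm⟩ := gpres _ (hmem k) _ (hmem i)
  refine ⟨hp.symm, fun c => (hr c).symm, ⟨fun h => ?_, fun h => by rw [← hm, h]⟩, hl.symm⟩
  obtain ⟨j', hj'⟩ := hmeet k i
  rw [hj', ginj _ (hmem j') _ (hmem j) (by rw [← hj', hm, h])]

theorem Eseq.comp_of_range_eq_lowerIndices (hT : ∀ f ∈ T, IsBSeq κ f) (ha : Eseq T lst n a)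
    (e : Fin m ↪o Fin n) (he : Set.range e = lowerIndices a) :
    Eseq T lst m (fun i => a (e i)) := by
  obtain ⟨hmem, hinc, hmeet, hres⟩ := ha
  have hlow (i : Fin m) (ℓ : Fin n) (hle : slen (a ℓ) ≤ slen (a (e i))) : ∃ j, e j = ℓ := by
    have hi : e i ∈ lowerIndices a := by rw [← Finset.mem_coe, ← he]; exact Set.mem_range_self i
    have hℓ := mem_lowerIndices_of_slen_le hi hle
    rwa [← Finset.mem_coe, ← he] at hℓ
  refine ⟨fun i => hmem _, fun i j hij => hinc _ _ (e.strictMono hij), fun i j => ?_,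
    fun i j hle => ?_⟩
  · obtain ⟨k, hk⟩ := hmeet (e i) (e j)
    obtain ⟨k', rfl⟩ := hlow i k (hk ▸ slen_smeet_le_left (hT _ (hmem _)))
    exact ⟨k', hk⟩
  · obtain ⟨k, hk⟩ := hres (e i) (e j) hle
    obtain ⟨k', rfl⟩ := hlow i k (hk ▸ slen_srestrict_le)
    exact ⟨k', hk⟩

end Embeddings

theorem exists_injective_finite_arrow_option (A : Type) [Finite A] (σ : Type u) [Infinite σ] :
    ∃ J : (A → Option σ) → σ, Function.Injective J := by
  suffices Cardinal.mk (A → Option σ) ≤ Cardinal.mk σ from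
    let ⟨J⟩ := this
    ⟨J, J.injective⟩
  rw [Cardinal.mk_arrow, Cardinal.mk_option, Cardinal.add_one_eq (Cardinal.aleph0_le_mk σ),
    Cardinal.lift_uzero]
  exact Cardinal.pow_le (Cardinal.aleph0_le_mk σ)
    (Cardinal.lift_lt_aleph0.mpr (Cardinal.lt_aleph0_of_finite A))

section Homogeneity

variable {κ : Ordinal} {T : Set BS} {lst : BS → BS → Prop} {σ : Type u}
  {C : (n : ℕ) → (Fin n → BS) → σ} {g g₁ g₂ : BS → BS} {N n m : ℕ}

def IsEndHomogeneous (T : Set BS) (lst : BS → BS → Prop) (C : (n : ℕ) → (Fin n → BS) → σ)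
    (g : BS → BS) (k : ℕ) : Prop :=
  ∀ (n : ℕ) (a b : Fin n → BS), Eseq T lst n a → Eseq T lst n b → TSimilar n a b →
    (∀ ℓ : Fin n, k ≤ TopCount n a ℓ → b ℓ = a ℓ) →
    C n (fun i => g (a i)) = C n (fun i => g (b i))

def IsHomogeneousUpTo (T : Set BS) (lst : BS → BS → Prop) (C : (n : ℕ) → (Fin n → BS) → σ)
    (g : BS → BS) (N : ℕ) : Prop :=
  ∀ n ≤ N, ∀ a b : Fin n → BS, Eseq T lst n a → Eseq T lst n b → TSimilar n a b →
    C n (fun i => g (a i)) = C n (fun i => g (b i))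

def colorTable (T : Set BS) (lst : BS → BS → Prop) (C : (n : ℕ) → (Fin n → BS) → σ)
    (g : BS → BS) (N : ℕ) (u : Fin m → BS) : (Σ n : Fin (N + 1), SimType n) → Option σ :=
  fun p => if hw : ∃ w : Fin p.1 → BS, Eseq T lst p.1 w ∧ simType w = p.2 ∧ HasLowerPart w u
    then some (C p.1 fun i => g (hw.choose i)) else none

theorem colorTable_simType (hC : IsEndHomogeneous T lst C g 1) {w : Fin n → BS} {u : Fin m → BS}
    (hw : Eseq T lst n w) (hwu : HasLowerPart w u) (hn : n < N + 1) :
    colorTable T lst C g N u ⟨⟨n, hn⟩, simType w⟩ = some (C n fun i => g (w i)) := by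
  have hex : ∃ w' : Fin n → BS, Eseq T lst n w' ∧ simType w' = simType w ∧ HasLowerPart w' u :=
    ⟨w, hw, rfl, hwu⟩
  obtain ⟨hw', hsim, hw'u⟩ := hex.choose_spec
  have hsim' := tSimilar_iff_simType_eq.mpr hsim
  rw [colorTable, dif_pos hex]
  refine congrArg some (hC n _ w hw' hw hsim' fun ℓ hℓ => ?_)
  exact (hw'u.eq_of_lowerIndices_eq hwu hsim'.lowerIndices_eq (one_le_topCount_iff.mp hℓ)).symm

theorem IsHomogeneousUpTo.comp_of_colorTable (hT : ∀ f ∈ T, IsBSeq κ f)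
    (hC : IsEndHomogeneous T lst C g₁ 1) (hg₂ : IsEmb T T lst lst g₂)
    {J : ((Σ n : Fin (N + 2), SimType n) → Option σ) → σ} (hJ : Function.Injective J)
    (hΦ : IsHomogeneousUpTo T lst (fun _ u => J (colorTable T lst C g₁ (N + 1) u)) g₂ N) :
    IsHomogeneousUpTo T lst C (g₁ ∘ g₂) (N + 1) := by
  intro n hn a b ha hb hab
  set e := (lowerIndices a).orderEmbOfFin rfl
  have hea : Set.range e = lowerIndices a := Finset.range_orderEmbOfFin _ _
  have heb : Set.range e = lowerIndices b := by rw [hea, hab.lowerIndices_eq]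
  have hm : (lowerIndices a).card ≤ N := by have := card_lowerIndices_le a; omega
  have htable := hJ (hΦ _ hm _ _ (ha.comp_of_range_eq_lowerIndices hT e hea)
    (hb.comp_of_range_eq_lowerIndices hT e heb) (hab.comp e))
  have hsa := ha.tSimilar_map hg₂
  have hsb := hb.tSimilar_map hg₂
  have hlowa : HasLowerPart (fun i => g₂ (a i)) (fun i => g₂ (a (e i))) :=
    ⟨e, by rw [hea, hsa.lowerIndices_eq], fun _ => rfl⟩
  have hlowb : HasLowerPart (fun i => g₂ (b i)) (fun i => g₂ (b (e i))) :=
    ⟨e, by rw [heb, hsb.lowerIndices_eq], fun _ => rfl⟩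
  have htype : simType (fun i => g₂ (a i)) = simType (fun i => g₂ (b i)) :=
    (tSimilar_iff_simType_eq.mp hsa).trans
      ((tSimilar_iff_simType_eq.mp hab).trans (tSimilar_iff_simType_eq.mp hsb).symm)
  have hlt : n < N + 2 := by omega
  show C n (fun i => g₁ (g₂ (a i))) = C n (fun i => g₁ (g₂ (b i)))
  apply Option.some.inj
  rw [← colorTable_simType hC (ha.map hT hT hg₂) hlowa hlt,
    ← colorTable_simType hC (hb.map hT hT hg₂) hlowb hlt, htable, htype]

theorem exists_isEmb_isHomogeneousUpTo [Infinite σ] (hT : ∀ f ∈ T, IsBSeq κ f)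
    (h : ArrowEnd T lst T lst σ 1) (N : ℕ) (C : (n : ℕ) → (Fin n → BS) → σ) :
    ∃ g, IsEmb T T lst lst g ∧ IsHomogeneousUpTo T lst C g N := by
  induction N generalizing C with
  | zero =>
    refine ⟨id, isEmb_id, fun n hn a b _ _ _ => ?_⟩
    obtain rfl : n = 0 := Nat.le_zero.mp hn
    rw [Subsingleton.elim a b]
  | succ N ih =>
    obtain ⟨g₁, hg₁, hC⟩ := h C
    obtain ⟨J, hJ⟩ := exists_injective_finite_arrow_option (Σ n : Fin (N + 2), SimType n) σ
    obtain ⟨g₂, hg₂, hΦ⟩ := ih fun _ u => J (colorTable T lst C g₁ (N + 1) u)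
    exact ⟨g₁ ∘ g₂, hg₁.comp hg₂, hΦ.comp_of_colorTable hT hC hg₂ hJ⟩

end Homogeneity

/-- Claim 1.11(2): if `𝒯 → (𝒯)^{end(1)}_σ` for an infinite cardinal (formalized: infinite
type) `σ` of colors, then `𝒯 → (𝒯)^n_σ` for every `n < ω`: for every coloring of
`eseq_n(𝒯)` there is an embedding `g` of `𝒯` into itself such that similar closed
`n`-tuples get the same induced color. -/
theorem stmt13 (κ : Ordinal) (T : Set BS) (hT : ∀ f ∈ T, IsBSeq κ f)
    (lst : BS → BS → Prop) (σ : Type*) (hσ : Infinite σ)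
    (h : ArrowEnd T lst T lst σ 1) :
    ∀ (n : ℕ) (c : (Fin n → BS) → σ), ∃ g : BS → BS, IsEmb T T lst lst g ∧
      ∀ a b : Fin n → BS, Eseq T lst n a → Eseq T lst n b → TSimilar n a b →
        c (fun i => g (a i)) = c (fun i => g (b i)) := by
  intro n c
  let C : (m : ℕ) → (Fin m → BS) → σ := fun m u =>
    if hm : m = n then c fun i => u (Fin.cast hm.symm i) else Classical.arbitrary σ
  obtain ⟨g, hg, hom⟩ := exists_isEmb_isHomogeneousUpTo hT h n C
  exact ⟨g, hg, fun a b ha hb hab => by simpa [C] using hom n le_rfl a b ha hb hab⟩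

end
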